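/- Let r ≥ 1 be an integer and let x, y ∈ o be such that x² − bxy + acy² ∈ o^× (so t(x,y) ∈ T(F) ∩ GL₂(o)). Then t(x,y) ∈ B(F)·K₂(p^r) if and only if a·y ∈ p^r and x − by ∈ o^×. -/

import Mathlib

/-!
Writing `u := x - b y`, the matrix `t(x,y)` factors as the upper triangular matrix
`[[det/u, c y], [0, u]]` times the lower unipotent matrix `[[1, 0], [-a y/u, 1]]`; this
gives the factorization in `B(F) K₂(𝔭^r)` as soon as `u` is a unit and `a y ∈ 𝔭^r`.
Conversely, in a factorization `t(x,y) = B k` the bottom row reads `B₁₁ k₁₀ = -a y` and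
`B₁₁ k₁₁ = u` with `k₁₁ ∈ 1 + 𝔭^r` a unit, so `v(a y) ≤ v(u) · ev r`. If `u` were not a
unit, both terms of `det = x u + c y (a y)` would lie in `𝔭`, contradicting `det ∈ 𝔬^×`.
-/

open scoped Pointwise
open Matrix

noncomputable section

abbrev Zm0 : Type := WithZero (Multiplicative ℤ)

/-- `ev n` is the value (in `ℤₘ₀ = WithZero (Multiplicative ℤ)`) of an element of additive
valuation `n`; thus `x ∈ 𝔭^n` iff `v x ≤ ev n`, `x ∈ 𝔬` iff `v x ≤ ev 0`, and `x ∈ 𝔬^×` iff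
`v x = ev 0`. -/
def ev (n : ℤ) : Zm0 := ((Multiplicative.ofAdd (-n) : Multiplicative ℤ) : Zm0)

variable {F : Type*} [Field F]

/-- the matrix t(x,y) = [[x, cy],[−ay, x−by]] -/
def tmat (a b c x y : F) : Matrix (Fin 2) (Fin 2) F :=
  !![x, c * y; -(a * y), x - b * y]

/-- GL₂(𝔬) : integral entries and unit determinant -/
def GL2O (v : Valuation F Zm0) : Set (Matrix (Fin 2) (Fin 2) F) :=
  {g | (∀ i j, v (g i j) ≤ ev 0) ∧ v g.det = ev 0}

/-- K₂(𝔭ⁿ) = { g ∈ GL₂(𝔬) : g₁₁ ∈ 1 + 𝔭ⁿ, g₂₂ ∈ 1 + 𝔭ⁿ, g₂₁ ∈ 𝔭ⁿ } -/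
def K2 (v : Valuation F Zm0) (n : ℕ) : Set (Matrix (Fin 2) (Fin 2) F) :=
  {g | g ∈ GL2O v ∧ v (g 0 0 - 1) ≤ ev n ∧ v (g 1 1 - 1) ≤ ev n ∧ v (g 1 0) ≤ ev n}

/-- B(F): invertible upper triangular matrices -/
def BF (F : Type*) [Field F] : Set (Matrix (Fin 2) (Fin 2) F) :=
  {g | g 1 0 = 0 ∧ g.det ≠ 0}

lemma ev_zero : ev 0 = 1 := rfl

lemma ev_le_one {n : ℤ} (hn : 0 ≤ n) : ev n ≤ 1 := by
  rw [← ev_zero, ev, ev, WithZero.coe_le_coe, Multiplicative.ofAdd_le]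
  omega

lemma ev_lt_one {n : ℤ} (hn : 0 < n) : ev n < 1 := by
  rw [← ev_zero, ev, ev, WithZero.coe_lt_coe, Multiplicative.ofAdd_lt]
  omega

lemma Valuation.map_sub_mul_eq_one_of_le {R Γ₀ : Type*} [CommRing R] [LinearOrderedCommGroupWithZero Γ₀]
    (v : Valuation R Γ₀) {a b c x y : R} (hb : v b ≤ 1) (hc : v c ≤ 1) (hx : v x ≤ 1)
    (hy : v y ≤ 1) (hdet : v (x ^ 2 - b * x * y + a * c * y ^ 2) = 1)
    (hay : v (a * y) ≤ v (x - b * y)) : v (x - b * y) = 1 := by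
  have hle : v (x - b * y) ≤ 1 := v.map_sub_le hx (by simpa using mul_le_one' hb hy)
  refine hle.antisymm (not_lt.1 fun hlt => hdet.not_lt ?_)
  rw [show x ^ 2 - b * x * y + a * c * y ^ 2 = x * (x - b * y) + c * y * (a * y) by ring]
  refine v.map_add_lt ?_ ?_ <;> rw [v.map_mul]
  · exact (mul_le_of_le_one_left' hx).trans_lt hlt
  · exact ((mul_le_of_le_one_left' (by simpa using mul_le_one' hc hy)).trans hay).trans_lt hlt

lemma tmat_eq_mul {a b c x y : F} (hu : x - b * y ≠ 0) :
    tmat a b c x y =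
      !![(x ^ 2 - b * x * y + a * c * y ^ 2) / (x - b * y), c * y; 0, x - b * y] *
        !![1, 0; -(a * y) / (x - b * y), 1] := by
  have h00 : (x ^ 2 - b * x * y + a * c * y ^ 2) / (x - b * y) + c * y * (-(a * y) / (x - b * y))
      = x := by field_simp; ring
  rw [tmat, mul_fin_two, mul_div_cancel₀ _ hu]
  simp [h00]

lemma BF_mul_apply_one {B : Matrix (Fin 2) (Fin 2) F} (hB : B ∈ BF F)
    (k : Matrix (Fin 2) (Fin 2) F) (j : Fin 2) : (B * k) 1 j = B 1 1 * k 1 j := by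
  simp [Matrix.mul_apply, hB.1]

lemma upperTriangular_mem_BF {p q u : F} (hp : p ≠ 0) (hu : u ≠ 0) : !![p, q; 0, u] ∈ BF F :=
  ⟨rfl, by simp [hp, hu]⟩

lemma lowerUnipotent_mem_K2 (v : Valuation F Zm0) {n : ℕ} {z : F} (hz : v z ≤ ev n) :
    !![1, 0; z, 1] ∈ K2 v n := by
  refine ⟨⟨fun i j => ?_, by simp [ev_zero]⟩, by simp, by simp, hz⟩
  fin_cases i <;> fin_cases j <;> simp [ev_zero, hz.trans (ev_le_one n.cast_nonneg)]

lemma K2_apply_one_one (v : Valuation F Zm0) {n : ℕ} (hn : 1 ≤ n)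
    {k : Matrix (Fin 2) (Fin 2) F} (hk : k ∈ K2 v n) : v (k 1 1) = 1 := by
  simpa using v.map_eq_of_sub_lt (hk.2.2.1.trans_lt (by simpa using ev_lt_one (n := n) (by omega)))

theorem stmt4_general
    (v : Valuation F Zm0)
    (a b c : F)
    (hbo : v b ≤ ev 0) (hc : v c = ev 0)
    (r : ℕ) (hr : 1 ≤ r)
    (x y : F) (hx : v x ≤ ev 0) (hy : v y ≤ ev 0)
    (hdet : v (x ^ 2 - b * x * y + a * c * y ^ 2) = ev 0) :
    tmat a b c x y ∈ BF F * K2 v r ↔ (v (a * y) ≤ ev r ∧ v (x - b * y) = ev 0) := by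
  rw [ev_zero] at *
  constructor
  · rintro ⟨B, hB, k, hk, hBk⟩
    have hrow (j : Fin 2) : B 1 1 * k 1 j = tmat a b c x y 1 j := by
      rw [← hBk]
      exact (BF_mul_apply_one hB k j).symm
    have hB11 : v (B 1 1) = v (x - b * y) := by
      simpa [tmat, K2_apply_one_one v hr hk] using congrArg v (hrow 1)
    have hay : v (a * y) ≤ v (x - b * y) * ev r := by
      have h10 : v (B 1 1) * v (k 1 0) = v (a * y) := by simpa [tmat] using congrArg v (hrow 0)
      rw [← h10, hB11]
      gcongr
      exact hk.2.2.2
    have hu : v (x - b * y) = 1 := v.map_sub_mul_eq_one_of_le hbo hc.le hx hy hdet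
      (hay.trans (mul_le_of_le_one_right' (ev_le_one r.cast_nonneg)))
    exact ⟨by simpa [hu] using hay, hu⟩
  · rintro ⟨hay, hu⟩
    have hu0 : x - b * y ≠ 0 := by rintro h; simp [h] at hu
    have hdet0 : x ^ 2 - b * x * y + a * c * y ^ 2 ≠ 0 := by rintro h; simp [h] at hdet
    rw [tmat_eq_mul hu0]
    refine Set.mul_mem_mul (upperTriangular_mem_BF (div_ne_zero hdet0 hu0) hu0)
      (lowerUnipotent_mem_K2 v ?_)
    simpa [hu] using hay

/-- Let r ≥ 1 and x, y ∈ 𝔬 with x² − bxy + acy² ∈ 𝔬^×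
(so t(x,y) ∈ T(F) ∩ GL₂(𝔬)).  Then t(x,y) ∈ B(F)·K₂(𝔭^r) iff a·y ∈ 𝔭^r and x − by ∈ 𝔬^×. -/
theorem stmt4
    (v : Valuation F Zm0) (ϖ : F) (hϖ : v ϖ = ev 1)
    (a b c : F)
    (hao : v a ≤ ev 0) (hbo : v b ≤ ev 0) (hc : v c = ev 0)
    (hd0 : b ^ 2 - 4 * (a * c) ≠ 0)
    (r : ℕ) (hr : 1 ≤ r)
    (x y : F) (hx : v x ≤ ev 0) (hy : v y ≤ ev 0)
    (hdet : v (x ^ 2 - b * x * y + a * c * y ^ 2) = ev 0) :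
    tmat a b c x y ∈ BF F * K2 v r ↔ (v (a * y) ≤ ev r ∧ v (x - b * y) = ev 0) :=
  stmt4_general v a b c hbo hc r hr x y hx hy hdet
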